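/- If (0, z) belongs to the set E = { (|q₀ + q·y|_p·‖(q₀,q)‖_∞, ‖q‖_p·‖(q₀,q)‖_∞) : (q₀,q) ∈ ℤ[1/p]^{n+1} }, then (0, u·z) ∈ E for every natural number u not divisible by p. -/
import Mathlib


open scoped BigOperators

/-- `x` lies in `ℤ[1/p] ⊂ ℚ`. -/
def ZInvP (p : ℕ) (x : ℚ) : Prop := ∃ (a : ℤ) (k : ℕ), x = a / (p : ℚ) ^ k

/-- `‖q‖_p`: max of `p`-adic absolute values of the coordinates of a rational vector. -/
noncomputable def pnorm (p : ℕ) {m : ℕ} (q : Fin m → ℚ) : ℝ :=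
  ⨆ i, ((padicNorm p (q i) : ℚ) : ℝ)

/-- `‖q‖_∞`: max of archimedean absolute values of the coordinates of a rational vector. -/
noncomputable def supnorm {m : ℕ} (q : Fin m → ℚ) : ℝ :=
  ⨆ i, |((q i : ℚ) : ℝ)|

/-- `‖v‖_p` for a vector of `p`-adic numbers. -/
noncomputable def pnormP {p : ℕ} [Fact p.Prime] {m : ℕ} (v : Fin m → ℚ_[p]) : ℝ :=
  ⨆ i, ‖v i‖

lemma supnorm_smul {m : ℕ} (c : ℚ) (hc : 0 ≤ c) (q : Fin m → ℚ) :
    supnorm (fun i => c * q i) = (c : ℝ) * supnorm q := by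
  unfold supnorm
  rw [Real.mul_iSup_of_nonneg (by exact_mod_cast hc)]
  congr 1; funext i
  push_cast
  rw [abs_mul, abs_of_nonneg (by exact_mod_cast hc : (0:ℝ) ≤ (c:ℝ))]

theorem stmt_5 (p : ℕ) [Fact p.Prime] (n : ℕ) (y : Fin n → ℚ_[p]) (z : ℝ)
    (h : ∃ (q0 : ℚ) (q : Fin n → ℚ), ZInvP p q0 ∧ (∀ i, ZInvP p (q i)) ∧
      ‖((q0 : ℚ_[p]) + ∑ i, (q i : ℚ_[p]) * y i)‖ * supnorm (Fin.cons q0 q) = 0 ∧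
      pnorm p q * supnorm (Fin.cons q0 q) = z) :
    ∀ u : ℕ, ¬ (p ∣ u) → ∃ (q0 : ℚ) (q : Fin n → ℚ), ZInvP p q0 ∧ (∀ i, ZInvP p (q i)) ∧
      ‖((q0 : ℚ_[p]) + ∑ i, (q i : ℚ_[p]) * y i)‖ * supnorm (Fin.cons q0 q) = 0 ∧
      pnorm p q * supnorm (Fin.cons q0 q) = (u : ℝ) * z := by
  intro u hu
  obtain ⟨q0, q, hz0, hzi, h1, h2⟩ := h
  refine ⟨(u : ℚ) * q0, fun i => (u : ℚ) * q i, ?_, ?_, ?_, ?_⟩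
  · obtain ⟨a, k, ha⟩ := hz0
    exact ⟨(u : ℤ) * a, k, by rw [ha]; push_cast; ring⟩
  · intro i
    obtain ⟨a, k, ha⟩ := hzi i
    exact ⟨(u : ℤ) * a, k, by show (u:ℚ) * q i = _; rw [ha]; push_cast; ring⟩
  · have hcons : (Fin.cons ((u:ℚ) * q0) (fun i => (u:ℚ) * q i) : Fin (n+1) → ℚ)
        = fun j => (u:ℚ) * (Fin.cons q0 q : Fin (n+1) → ℚ) j := by
      funext j
      refine Fin.cases ?_ ?_ j <;> simp
    have key : ((((u:ℚ) * q0 : ℚ) : ℚ_[p]) + ∑ i, (((u:ℚ) * q i : ℚ) : ℚ_[p]) * y i)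
        = (u : ℚ_[p]) * ((q0 : ℚ_[p]) + ∑ i, (q i : ℚ_[p]) * y i) := by
      push_cast
      rw [mul_add, Finset.mul_sum]
      congr 1
      exact Finset.sum_congr rfl fun i _ => by ring
    rw [key, hcons, norm_mul, supnorm_smul _ (by positivity)]
    calc ‖(u : ℚ_[p])‖ * ‖(q0 : ℚ_[p]) + ∑ i, (q i : ℚ_[p]) * y i‖ * ((u:ℝ) * supnorm (Fin.cons q0 q))
        = ‖(u : ℚ_[p])‖ * (u:ℝ) * (‖(q0 : ℚ_[p]) + ∑ i, (q i : ℚ_[p]) * y i‖ * supnorm (Fin.cons q0 q)) := by ring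
      _ = 0 := by rw [h1, mul_zero]
  · have hu1 : padicNorm p (u : ℚ) = 1 := (padicNorm.nat_eq_one_iff u).2 hu
    have hp : pnorm p (fun i => (u:ℚ) * q i) = pnorm p q := by
      unfold pnorm
      congr 1; funext i
      rw [padicNorm.mul, hu1, one_mul]
    have hcons : (Fin.cons ((u:ℚ) * q0) (fun i => (u:ℚ) * q i) : Fin (n+1) → ℚ)
        = fun j => (u:ℚ) * (Fin.cons q0 q : Fin (n+1) → ℚ) j := by
      funext j
      refine Fin.cases ?_ ?_ j <;> simp
    rw [hp, hcons, supnorm_smul _ (by positivity)]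
    push_cast
    rw [← h2]; ring
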